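/- Let n > m ≥ 1 and d ≥ 1 be integers and let g_1, …, g_n ∈ ℂ[z_1, …, z_m] each have total degree at most d. Then there exists a nonzero polynomial A ∈ ℂ[x_1, …, x_n] of individual degree at most ⌈(nd)^{m/(n−m)}⌉ in each variable (the exponent m/(n−m) being a real number and ⌈·⌉ the ceiling) such that A(g_1, …, g_n) is the zero polynomial in ℂ[z_1, …, z_m]. -/

import Mathlib

open MvPolynomial

/-! The substitution `A ↦ A(g)` is linear. It maps polynomials in `n` variables of individual
degree at most `D`, a space of dimension `(D + 1)^n`, into polynomials in `m` variables of total
degree at most `nDd`, a space of dimension at most `(nDd + 1)^m`. For `D ≥ (nd)^{m/(n-m)}` we get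
`(nDd + 1)^m ≤ (nd)^m (D + 1)^m < (D + 1)^n`, so the substitution has a nonzero kernel. -/

namespace MvPolynomial

theorem finrank_restrictDegree (σ K : Type*) [Fintype σ] [Field K] (D : ℕ) :
    Module.finrank K (restrictDegree σ K D) = (D + 1) ^ Fintype.card σ := by
  have hbox : {s : σ →₀ ℕ | ∀ i, s i ≤ D} ≃ (σ → Set.Iic D) :=
    (Finsupp.equivFunOnFinite.subtypeEquiv fun _ => Iff.rfl).trans
      (Equiv.subtypePiEquivPi (p := fun _ e => e ∈ Set.Iic D))
  rw [restrictDegree, Module.finrank_eq_nat_card_basis (basisRestrictSupport K _),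
    Nat.card_congr hbox, Nat.card_fun]
  simp

variable {σ τ R : Type*} [CommSemiring R]

theorem totalDegree_aeval_monomial_le (g : σ → MvPolynomial τ R) (s : σ →₀ ℕ) (c : R) :
    (aeval g (monomial s c)).totalDegree ≤ s.sum fun i e => e * (g i).totalDegree := by
  rw [aeval_monomial, ← C_eq_algebraMap]
  refine (totalDegree_mul _ _).trans ?_
  rw [totalDegree_C, zero_add, Finsupp.prod]
  refine (totalDegree_finsetProd _ _).trans (Finset.sum_le_sum fun i _ => ?_)
  exact totalDegree_pow _ _

theorem totalDegree_aeval_le_of_mem_restrictDegree [Fintype σ] {g : σ → MvPolynomial τ R}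
    {d D : ℕ} (hg : ∀ i, (g i).totalDegree ≤ d) {A : MvPolynomial σ R}
    (hA : A ∈ restrictDegree σ R D) :
    (aeval g A).totalDegree ≤ Fintype.card σ * (D * d) := by
  rw [mem_restrictDegree] at hA
  conv_lhs => rw [A.as_sum, map_sum]
  refine totalDegree_finsetSum_le fun s hs => (totalDegree_aeval_monomial_le g s _).trans ?_
  calc (s.sum fun i e => e * (g i).totalDegree)
      ≤ ∑ _i ∈ s.support, D * d :=
        Finset.sum_le_sum fun i _ => Nat.mul_le_mul (hA s hs i) (hg i)
    _ ≤ ∑ _i : σ, D * d := Finset.sum_le_sum_of_subset (Finset.subset_univ _)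
    _ = Fintype.card σ * (D * d) := by simp

theorem exists_ne_zero_degreeOf_le_aeval_eq_zero {K : Type*} [Field K] [Fintype σ] [Fintype τ]
    {g : σ → MvPolynomial τ K} {d D : ℕ} (hg : ∀ i, (g i).totalDegree ≤ d)
    (hD : (Fintype.card σ * (D * d) + 1) ^ Fintype.card τ < (D + 1) ^ Fintype.card σ) :
    ∃ A : MvPolynomial σ K, A ≠ 0 ∧ (∀ i, A.degreeOf i ≤ D) ∧ aeval g A = 0 := by
  let V := restrictDegree σ K D
  let W := restrictDegree τ K (Fintype.card σ * (D * d))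
  have hmaps : ∀ A ∈ V, aeval g A ∈ W := fun A hA =>
    restrictTotalDegree_le_restrictDegree τ K _ <|
      (mem_restrictTotalDegree _ _ _).mpr (totalDegree_aeval_le_of_mem_restrictDegree hg hA)
  let T : V →ₗ[K] W :=
    ((aeval g).toLinearMap.comp V.subtype).codRestrict W fun A => hmaps A.1 A.2
  have hker : LinearMap.ker T ≠ ⊥ := LinearMap.ker_ne_bot_of_finrank_lt <| by
    rwa [finrank_restrictDegree, finrank_restrictDegree]
  obtain ⟨⟨A, hAV⟩, hAT, hA0⟩ := (Submodule.ne_bot_iff _).mp hker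
  refine ⟨A, fun h => hA0 (Subtype.ext h), fun i => ?_, congrArg Subtype.val hAT⟩
  exact degreeOf_le_iff.mpr fun s hs => (mem_restrictDegree _ _ _).mp hAV s hs i

end MvPolynomial

theorem pow_lt_pow_sub_of_rpow_le {m n t D : ℕ} (hmn : m < n)
    (hD : (t : ℝ) ^ ((m : ℝ) / ((n : ℝ) - m)) ≤ D) : t ^ m < (D + 1) ^ (n - m) := by
  have hk : ((n : ℝ) - m) = ((n - m : ℕ) : ℝ) := by rw [Nat.cast_sub hmn.le]
  rw [hk] at hD
  have hk0 : ((n - m : ℕ) : ℝ) ≠ 0 := by exact_mod_cast (Nat.sub_pos_of_lt hmn).ne'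
  have hroot : ((t : ℝ) ^ ((m : ℝ) / (n - m : ℕ))) ^ (n - m) = (t : ℝ) ^ m := by
    rw [← Real.rpow_mul_natCast (by positivity), div_mul_cancel₀ _ hk0, Real.rpow_natCast]
  have hlt : ((t : ℝ) ^ ((m : ℝ) / (n - m : ℕ))) ^ (n - m) < ((D : ℝ) + 1) ^ (n - m) :=
    pow_lt_pow_left₀ (by linarith) (by positivity) (by omega)
  exact_mod_cast hroot ▸ hlt

theorem mul_add_one_pow_lt_of_rpow_le {m n t D : ℕ} (hmn : m < n) (ht : 1 ≤ t)
    (hD : (t : ℝ) ^ ((m : ℝ) / ((n : ℝ) - m)) ≤ D) : (t * D + 1) ^ m < (D + 1) ^ n :=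
  calc (t * D + 1) ^ m ≤ (t * (D + 1)) ^ m := Nat.pow_le_pow_left (by nlinarith) m
    _ = t ^ m * (D + 1) ^ m := mul_pow _ _ _
    _ < (D + 1) ^ (n - m) * (D + 1) ^ m :=
        Nat.mul_lt_mul_of_pos_right (pow_lt_pow_sub_of_rpow_le hmn hD) (by positivity)
    _ = (D + 1) ^ n := by rw [← pow_add, Nat.sub_add_cancel hmn.le]

theorem annihilator_exists_with_degree_bound_general
    (m n d : ℕ) (hmn : m < n) (hd : 1 ≤ d)
    (g : Fin n → MvPolynomial (Fin m) ℂ)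
    (hg : ∀ i, (g i).totalDegree ≤ d) :
    ∃ A : MvPolynomial (Fin n) ℂ, A ≠ 0 ∧
      (∀ i, A.degreeOf i ≤ ⌈((n * d : ℕ) : ℝ) ^ ((m : ℝ) / ((n : ℝ) - (m : ℝ)))⌉₊) ∧
      MvPolynomial.aeval g A = 0 := by
  refine exists_ne_zero_degreeOf_le_aeval_eq_zero hg ?_
  have hnd : 1 ≤ n * d := Nat.one_le_iff_ne_zero.mpr (Nat.mul_ne_zero (by omega) (by omega))
  have hcount := mul_add_one_pow_lt_of_rpow_le hmn hnd (Nat.le_ceil _)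
  rw [Fintype.card_fin, Fintype.card_fin]
  rwa [mul_assoc, mul_comm d] at hcount

/-- Existence part of Lemma 3.1: any tuple of `n > m` polynomials in `m` variables of
degree at most `d` has a nonzero annihilator of individual degree at most
`⌈(nd)^{m/(n−m)}⌉` in each variable. -/
theorem annihilator_exists_with_degree_bound
    (m n d : ℕ) (hm : 1 ≤ m) (hmn : m < n) (hd : 1 ≤ d)
    (g : Fin n → MvPolynomial (Fin m) ℂ)
    (hg : ∀ i, (g i).totalDegree ≤ d) :
    ∃ A : MvPolynomial (Fin n) ℂ, A ≠ 0 ∧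
      (∀ i, A.degreeOf i ≤ ⌈((n * d : ℕ) : ℝ) ^ ((m : ℝ) / ((n : ℝ) - (m : ℝ)))⌉₊) ∧
      MvPolynomial.aeval g A = 0 :=
  annihilator_exists_with_degree_bound_general m n d hmn hd g hg
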